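/- Pochhammer ratio bound: for every η > 1/8 and τ ∈ (0,1), sup over n ∈ ℤ_{≥1} and complex z with |z| = 1 of τ^{η n²} · |((-τ^{-n/2} z; τ)_∞ / (-τ^{n/2} z; τ)_∞) · ((τ^{1+n} z²; τ)_∞ / (τ z²; τ)_∞)| is finite. -/

import Mathlib

/-!
Splitting off the first `n` factors of `(a; τ)_∞` turns the expression into the finite product
`∏_{k<n} (1 + τ^{k-n/2} z) / (1 - τ^{k+1} z²)`. The denominator is at least
`exp (-τ / (1 - τ)²)` uniformly in `n`, while each numerator factor is at most
`2 τ^{-(⌈n/2⌉-k)⁺}`, so the numerator is at most `2^n τ^{-(n²/8 + n)}`. Against `τ^{η n²}` this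
leaves `(2/τ)^n τ^{(η - 1/8) n²}`, which is bounded because `η > 1/8`.
-/

/-- The infinite q-Pochhammer symbol `(a; q)_∞ = ∏_{k=0}^∞ (1 - q^k a)`. -/
noncomputable def pochinf (a q : ℂ) : ℂ := ∏' k : ℕ, (1 - q ^ k * a)

open Finset

section Pochhammer

variable {q : ℂ}

lemma summable_norm_pow_mul (hq : ‖q‖ < 1) (a : ℂ) : Summable fun k : ℕ ↦ ‖q ^ k * a‖ := by
  simpa [norm_mul, norm_pow] using
    (summable_geometric_of_lt_one (norm_nonneg q) hq).mul_right ‖a‖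

lemma multipliable_one_sub_pow_mul (hq : ‖q‖ < 1) (a : ℂ) :
    Multipliable fun k : ℕ ↦ 1 - q ^ k * a := by
  simpa [sub_eq_add_neg] using
    multipliable_one_add_of_summable (f := fun k : ℕ ↦ -(q ^ k * a))
      (by simpa using summable_norm_pow_mul hq a)

lemma pochinf_ne_zero {a : ℂ} (hq : ‖q‖ < 1) (ha : ‖a‖ < 1) : pochinf a q ≠ 0 := by
  have hfac (k : ℕ) : 1 + -(q ^ k * a) ≠ 0 := by
    have hsmall : ‖q ^ k * a‖ < 1 := by
      rw [norm_mul, norm_pow]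
      exact (mul_le_of_le_one_left (norm_nonneg a) (pow_le_one₀ (norm_nonneg q) hq.le)).trans_lt ha
    rw [← sub_eq_add_neg, sub_ne_zero]
    rintro h
    rw [← h, norm_one] at hsmall
    exact hsmall.false
  simpa [pochinf, sub_eq_add_neg] using
    tprod_one_add_ne_zero_of_summable hfac (by simpa using summable_norm_pow_mul hq a)

lemma pochinf_eq_prod_range_mul (hq : ‖q‖ < 1) (a : ℂ) (n : ℕ) :
    pochinf a q = (∏ k ∈ range n, (1 - q ^ k * a)) * pochinf (q ^ n * a) q := by
  have hshift : (fun i : ℕ ↦ 1 - q ^ (i + n) * a) = fun i ↦ 1 - q ^ i * (q ^ n * a) := by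
    simp only [pow_add, mul_assoc]
  have h := Multipliable.prod_mul_tprod_nat_mul' (f := fun k : ℕ ↦ 1 - q ^ k * a) (k := n)
    (hshift ▸ multipliable_one_sub_pow_mul hq (q ^ n * a))
  rw [pochinf, pochinf, ← h, hshift]

lemma pochinf_div_pochinf_pow_mul {a : ℂ} (n : ℕ) (hq : ‖q‖ < 1) (ha : ‖q ^ n * a‖ < 1) :
    pochinf a q / pochinf (q ^ n * a) q = ∏ k ∈ range n, (1 - q ^ k * a) := by
  rw [pochinf_eq_prod_range_mul hq a n, mul_div_cancel_right₀ _ (pochinf_ne_zero hq ha)]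

end Pochhammer

lemma Finset.norm_prod_one_sub_le {ι R : Type*} [NormedCommRing R] [NormOneClass R]
    (s : Finset ι) (f : ι → R) : ‖∏ i ∈ s, (1 - f i)‖ ≤ ∏ i ∈ s, (1 + ‖f i‖) :=
  (s.norm_prod_le _).trans <| prod_le_prod (fun _ _ ↦ norm_nonneg _) fun i _ ↦
    (norm_sub_le _ _).trans_eq (by rw [norm_one])

lemma Finset.prod_one_sub_norm_le_norm_prod {ι R : Type*} [NormedCommRing R] [NormMulClass R]
    [NormOneClass R] (s : Finset ι) {f : ι → R} (hf : ∀ i ∈ s, ‖f i‖ ≤ 1) :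
    ∏ i ∈ s, (1 - ‖f i‖) ≤ ‖∏ i ∈ s, (1 - f i)‖ := by
  rw [norm_prod]
  refine prod_le_prod (fun i hi ↦ sub_nonneg.2 (hf i hi)) fun i _ ↦ ?_
  simpa using norm_sub_norm_le (1 : R) (f i)

lemma Finset.sum_range_tsub_mul_two {m n : ℕ} (h : m ≤ n) :
    (∑ k ∈ range n, (m - k)) * 2 = m * (m + 1) := by
  have htail : ∑ k ∈ Ico m n, (m - k) = 0 :=
    sum_eq_zero fun k hk ↦ Nat.sub_eq_zero_of_le (mem_Ico.1 hk).1
  have hreflect : ∑ k ∈ range m, (m - k) = ∑ k ∈ range m, (k + 1) := by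
    rw [← sum_range_reflect (fun k ↦ k + 1) m]
    exact sum_congr rfl fun k hk ↦ by have := mem_range.1 hk; omega
  rw [← sum_range_add_sum_Ico _ h, htail, add_zero, hreflect, ← add_zero (∑ k ∈ range m, (k + 1)),
    ← sum_range_succ' (fun k ↦ k) m, sum_range_id_mul_two, Nat.add_sub_cancel, mul_comm]

namespace Real

lemma exp_neg_div_le_one_sub {x t : ℝ} (hx : 0 ≤ x) (hxt : x ≤ t) (ht : t < 1) :
    exp (-(x / (1 - t))) ≤ 1 - x := by
  have hx1 : 0 < 1 - x := by linarith
  calc exp (-(x / (1 - t))) ≤ exp (1 - (1 - x)⁻¹) := by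
        rw [show 1 - (1 - x)⁻¹ = -(x / (1 - x)) by field_simp; ring]
        gcongr
    _ ≤ exp (log (1 - x)) := exp_le_exp.2 (one_sub_inv_le_log_of_pos hx1)
    _ = 1 - x := exp_log hx1

lemma exp_neg_le_prod_range_one_sub_pow {τ : ℝ} (hτ0 : 0 ≤ τ) (hτ1 : τ < 1) (n : ℕ) :
    exp (-(τ / (1 - τ) ^ 2)) ≤ ∏ k ∈ range n, (1 - τ ^ (k + 1)) := by
  have hgeom : ∑ k ∈ range n, τ ^ (k + 1) ≤ τ / (1 - τ) := by
    calc ∑ k ∈ range n, τ ^ (k + 1) = ∑ k ∈ Ico 1 (n + 1), τ ^ k := by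
          rw [range_eq_Ico, sum_Ico_add' (fun k ↦ τ ^ k)]
      _ ≤ τ / (1 - τ) := by simpa using geom_sum_Ico_le_of_lt_one (m := 1) (n := n + 1) hτ0 hτ1
  calc exp (-(τ / (1 - τ) ^ 2)) ≤ exp (∑ k ∈ range n, -(τ ^ (k + 1) / (1 - τ))) := by
        rw [sum_neg_distrib, ← sum_div, sq, ← div_div, exp_le_exp, neg_le_neg_iff]
        gcongr
    _ = ∏ k ∈ range n, exp (-(τ ^ (k + 1) / (1 - τ))) := exp_sum _ _
    _ ≤ ∏ k ∈ range n, (1 - τ ^ (k + 1)) := prod_le_prod (fun _ _ ↦ (exp_pos _).le)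
        fun k _ ↦ exp_neg_div_le_one_sub (by positivity)
          (pow_le_of_le_one hτ0 hτ1.le k.succ_ne_zero) hτ1

lemma prod_range_one_add_rpow_le {τ : ℝ} (hτ0 : 0 < τ) (hτ1 : τ ≤ 1) (n : ℕ) :
    ∏ k ∈ range n, (1 + τ ^ ((k : ℝ) - n / 2)) ≤ 2 ^ n * τ ^ (-((n : ℝ) ^ 2 / 8 + n)) := by
  set m := (n + 1) / 2
  have hinv_pow (j : ℕ) : τ⁻¹ ^ j = τ ^ (-(j : ℝ)) := by
    rw [rpow_neg hτ0.le, rpow_natCast, inv_pow]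
  have hfactor (k : ℕ) : 1 + τ ^ ((k : ℝ) - n / 2) ≤ 2 * τ⁻¹ ^ (m - k) := by
    have hone : 1 ≤ τ⁻¹ ^ (m - k) := one_le_pow₀ ((one_le_inv₀ hτ0).2 hτ1)
    have hexp : -((m - k : ℕ) : ℝ) ≤ k - n / 2 := by
      have h1 : (n : ℝ) ≤ 2 * m := by exact_mod_cast (by omega : n ≤ 2 * m)
      have h2 : (m : ℝ) ≤ (m - k : ℕ) + k := by exact_mod_cast (by omega : m ≤ (m - k) + k)
      linarith
    have hpow : τ ^ ((k : ℝ) - n / 2) ≤ τ⁻¹ ^ (m - k) :=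
      hinv_pow _ ▸ rpow_le_rpow_of_exponent_ge hτ0 hτ1 hexp
    linarith
  have hsum : ((∑ k ∈ range n, (m - k) : ℕ) : ℝ) ≤ (n : ℝ) ^ 2 / 8 + n := by
    have h8 : (∑ k ∈ range n, (m - k)) * 8 ≤ n ^ 2 + 8 * n := by
      have h2 := sum_range_tsub_mul_two (by omega : m ≤ n)
      have h3 : 2 * m ≤ n + 1 := by omega
      have h4 : m ≤ n := by omega
      nlinarith
    have : ((∑ k ∈ range n, (m - k) : ℕ) : ℝ) * 8 ≤ (n : ℝ) ^ 2 + 8 * n := by exact_mod_cast h8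
    linarith
  calc ∏ k ∈ range n, (1 + τ ^ ((k : ℝ) - n / 2)) ≤ ∏ k ∈ range n, (2 * τ⁻¹ ^ (m - k)) :=
        prod_le_prod (fun _ _ ↦ by positivity) fun k _ ↦ hfactor k
    _ = 2 ^ n * τ⁻¹ ^ (∑ k ∈ range n, (m - k)) := by
        rw [prod_mul_distrib, prod_const, card_range, prod_pow_eq_pow_sum]
    _ ≤ 2 ^ n * τ ^ (-((n : ℝ) ^ 2 / 8 + n)) := by
        rw [hinv_pow]
        exact mul_le_mul_of_nonneg_left (rpow_le_rpow_of_exponent_ge hτ0 hτ1 (neg_le_neg hsum))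
          (by positivity)

lemma exists_rpow_mul_rpow_quadratic_le {b τ ε : ℝ} (hb : 0 < b) (hτ0 : 0 < τ) (hτ1 : τ < 1)
    (hε : 0 < ε) (β : ℝ) : ∃ C, ∀ x : ℝ, b ^ x * τ ^ (ε * x ^ 2 + β * x) ≤ C := by
  have hL : 0 < -log τ := neg_pos.2 (log_neg hτ0 hτ1)
  set c := log b + β * log τ
  refine ⟨exp (c ^ 2 / (4 * (ε * -log τ))), fun x ↦ ?_⟩
  rw [rpow_def_of_pos hb, rpow_def_of_pos hτ0, ← exp_add, exp_le_exp, le_div_iff₀ (by positivity)]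
  nlinarith [sq_nonneg (2 * (ε * -log τ) * x - c)]

end Real

lemma pochinf_ratio_eq_prod_div_prod {τ : ℝ} (hτ0 : 0 < τ) (hτ1 : τ < 1) {n : ℕ} (hn : 1 ≤ n)
    {z : ℂ} (hz : ‖z‖ ≤ 1) :
    (pochinf (-(((τ ^ (-(n : ℝ) / 2) : ℝ) : ℂ) * z)) τ /
        pochinf (-(((τ ^ ((n : ℝ) / 2) : ℝ) : ℂ) * z)) τ) *
      (pochinf ((τ : ℂ) ^ (1 + n) * z ^ 2) τ / pochinf ((τ : ℂ) * z ^ 2) τ) =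
    (∏ k ∈ range n, (1 - (τ : ℂ) ^ k * -(((τ ^ (-(n : ℝ) / 2) : ℝ) : ℂ) * z))) /
      ∏ k ∈ range n, (1 - (τ : ℂ) ^ k * (τ * z ^ 2)) := by
  have hnorm : ‖(τ : ℂ)‖ = τ := by rw [Complex.norm_real, Real.norm_of_nonneg hτ0.le]
  have hq : ‖(τ : ℂ)‖ < 1 := by rwa [hnorm]
  have hshift₁ : (τ : ℂ) ^ n * -(((τ ^ (-(n : ℝ) / 2) : ℝ) : ℂ) * z) =
      -(((τ ^ ((n : ℝ) / 2) : ℝ) : ℂ) * z) := by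
    rw [mul_neg, ← mul_assoc, ← Complex.ofReal_pow, ← Complex.ofReal_mul, ← Real.rpow_natCast,
      ← Real.rpow_add hτ0]
    ring_nf
  have hshift₂ : (τ : ℂ) ^ n * (τ * z ^ 2) = τ ^ (1 + n) * z ^ 2 := by ring
  have hsmall₁ : ‖-(((τ ^ ((n : ℝ) / 2) : ℝ) : ℂ) * z)‖ < 1 := by
    rw [norm_neg, norm_mul, Complex.norm_real, Real.norm_of_nonneg (by positivity)]
    exact (mul_le_of_le_one_right (by positivity) hz).trans_lt
      (Real.rpow_lt_one hτ0.le hτ1 (by positivity))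
  have hsmall₂ : ‖(τ : ℂ) ^ (1 + n) * z ^ 2‖ < 1 := by
    rw [norm_mul, norm_pow, norm_pow, hnorm]
    exact (mul_le_of_le_one_right (by positivity) (pow_le_one₀ (norm_nonneg z) hz)).trans_lt
      (pow_lt_one₀ hτ0.le hτ1 (by omega))
  have h₁ := pochinf_div_pochinf_pow_mul n hq (a := -(((τ ^ (-(n : ℝ) / 2) : ℝ) : ℂ) * z))
    (by rwa [hshift₁])
  have h₂ := pochinf_div_pochinf_pow_mul n hq (a := (τ : ℂ) * z ^ 2) (by rwa [hshift₂])
  rw [hshift₁] at h₁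
  rw [hshift₂] at h₂
  rw [h₁, ← h₂, div_div_eq_mul_div, mul_div_assoc]

lemma norm_prod_range_one_sub_neg_rpow_mul_le {τ : ℝ} (hτ0 : 0 < τ) (hτ1 : τ ≤ 1) (n : ℕ)
    {z : ℂ} (hz : ‖z‖ ≤ 1) :
    ‖∏ k ∈ range n, (1 - (τ : ℂ) ^ k * -(((τ ^ (-(n : ℝ) / 2) : ℝ) : ℂ) * z))‖ ≤
      2 ^ n * τ ^ (-((n : ℝ) ^ 2 / 8 + n)) := by
  refine ((range n).norm_prod_one_sub_le _).trans ((prod_le_prod (fun _ _ ↦ by positivity)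
    fun k _ ↦ ?_).trans (Real.prod_range_one_add_rpow_le hτ0 hτ1 n))
  rw [norm_mul, norm_neg, norm_mul, norm_pow, Complex.norm_real, Complex.norm_real,
    Real.norm_of_nonneg hτ0.le, Real.norm_of_nonneg (by positivity), ← Real.rpow_natCast,
    ← mul_assoc, ← Real.rpow_add hτ0, neg_div, ← sub_eq_add_neg]
  gcongr
  exact mul_le_of_le_one_right (by positivity) hz

lemma exp_neg_le_norm_prod_range_one_sub_pow_mul {τ : ℝ} (hτ0 : 0 ≤ τ) (hτ1 : τ < 1) (n : ℕ)
    {w : ℂ} (hw : ‖w‖ ≤ 1) :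
    Real.exp (-(τ / (1 - τ) ^ 2)) ≤ ‖∏ k ∈ range n, (1 - (τ : ℂ) ^ k * (τ * w))‖ := by
  have hfac (k : ℕ) : ‖(τ : ℂ) ^ k * (τ * w)‖ ≤ τ ^ (k + 1) := by
    rw [norm_mul, norm_mul, norm_pow, Complex.norm_real, Real.norm_of_nonneg hτ0, pow_succ]
    exact mul_le_mul_of_nonneg_left (mul_le_of_le_one_right hτ0 hw) (by positivity)
  refine (Real.exp_neg_le_prod_range_one_sub_pow hτ0 hτ1 n).trans ?_
  refine (prod_le_prod (fun k _ ↦ sub_nonneg.2 (pow_le_one₀ hτ0 hτ1.le)) fun k _ ↦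
    sub_le_sub_left (hfac k) 1).trans ?_
  exact (range n).prod_one_sub_norm_le_norm_prod fun k _ ↦
    (hfac k).trans (pow_le_one₀ hτ0 hτ1.le)

/-- **Pochhammer ratio bound**: for every `η > 1/8` and `τ ∈ (0,1)`, the quantity
`τ^{η n²} |((-τ^{-n/2} z; τ)_∞ / (-τ^{n/2} z; τ)_∞) ((τ^{1+n} z²; τ)_∞ / (τ z²; τ)_∞)|`
is bounded uniformly over `n ≥ 1` and `|z| = 1`. -/
theorem pochhammer_ratio_bound (η τ : ℝ) (hη : 1 / 8 < η)
    (hτ : τ ∈ Set.Ioo (0 : ℝ) 1) :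
    ∃ C : ℝ, ∀ n : ℕ, 1 ≤ n → ∀ z : ℂ, ‖z‖ = 1 →
      τ ^ (η * (n : ℝ) ^ 2) *
        ‖
          ((pochinf (-(((τ ^ (-(n : ℝ) / 2) : ℝ) : ℂ) * z)) (τ : ℂ) /
              pochinf (-(((τ ^ ((n : ℝ) / 2) : ℝ) : ℂ) * z)) (τ : ℂ)) *
            (pochinf ((τ : ℂ) ^ (1 + n) * z ^ 2) (τ : ℂ) /
              pochinf ((τ : ℂ) * z ^ 2) (τ : ℂ)))‖ ≤ C := by
  obtain ⟨hτ0, hτ1⟩ := hτ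
  obtain ⟨C, hC⟩ :=
    Real.exists_rpow_mul_rpow_quadratic_le two_pos hτ0 hτ1 (sub_pos.2 hη) (-1)
  set c := Real.exp (-(τ / (1 - τ) ^ 2))
  have hc : 0 < c := Real.exp_pos _
  refine ⟨C / c, fun n hn z hz ↦ ?_⟩
  have hnum := norm_prod_range_one_sub_neg_rpow_mul_le hτ0 hτ1.le n hz.le
  have hden := exp_neg_le_norm_prod_range_one_sub_pow_mul hτ0.le hτ1 n (w := z ^ 2)
    (by rw [norm_pow, hz, one_pow])
  rw [pochinf_ratio_eq_prod_div_prod hτ0 hτ1 hn hz.le, norm_div]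
  calc _ ≤ τ ^ (η * (n : ℝ) ^ 2) * (2 ^ n * τ ^ (-((n : ℝ) ^ 2 / 8 + n)) / c) := by gcongr
    _ = 2 ^ (n : ℝ) * τ ^ ((η - 1 / 8) * (n : ℝ) ^ 2 + -1 * n) / c := by
        rw [show (η - 1 / 8) * (n : ℝ) ^ 2 + -1 * n = η * n ^ 2 + -((n : ℝ) ^ 2 / 8 + n) by ring,
          Real.rpow_add hτ0, Real.rpow_natCast]
        ring
    _ ≤ C / c := by gcongr; exact hC n
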